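/- arXiv:1202.5738 — 2 statements merged into one kernel-verified Lean document; each statement's English description precedes it below -/
import Mathlib

section
/- Let 0 < d, e be coprime positive integers, n = e + d, p = p_e the e-th parabolic subalgebra of sl_n(ℂ) (block upper-triangular traceless matrices with diagonal blocks of sizes e and d), and J = J_{(e,d)} the 0-1 matrix defined by the recursion: J_{(1,1)} = [[0,1],[0,0]], and for (p,q) with ε(p,q) = (a,b) (where ε(a,b) = (a-b,b) if a>b, (a,b-a) if a<b), J_{(p,q)} is obtained by the block constructions (E:formcanonique). Then the pairing ω_J : p × p → ℂ, ω_J(a,b) = tr(Jᵗ[a,b]), is non-degenerate, i.e. p is a Frobenius Lie algebra with Frobenius functional a ↦ tr(Jᵗa). -/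
open Matrix

/-- The entries of the canonical 0-1 matrix `J_{(e,d)}` defined by the recursion
`J_{(1,1)} = [[0,1],[0,0]]` together with the block extension rules. -/
noncomputable def Jfun : ℕ → ℕ → ℕ → ℕ → ℂ
  | e, d, i, j =>
    if e = 1 ∧ d = 1 then (if i = 0 ∧ j = 1 then 1 else 0)
    else if h1 : 0 < e ∧ e < d then
      -- `J_{(e,d)} = [[0, 1, 0], [0, A₁, A₂], [0, 0, A₃]]` where `J_{(e,d-e)} = [[A₁,A₂],[0,A₃]]`
      (if i < e then (if j = i + e then 1 else 0)
       else if e ≤ j then Jfun e (d - e) (i - e) (j - e) else 0)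
    else if h2 : 0 < d ∧ d < e then
      -- `J_{(e,d)} = [[A₁, A₂, 0], [0, A₃, 1], [0, 0, 0]]` where `J_{(e-d,d)} = [[A₁,A₂],[0,A₃]]`
      (if i < e ∧ j < e then Jfun (e - d) d i j
       else if e - d ≤ i ∧ i < e ∧ j = i + d then 1 else 0)
    else 0
  termination_by e d _ _ => e + d
  decreasing_by all_goals omega

/-!
The pairing `ω_J(a, b) = tr(Jᵀ[a, b])` equals `tr([Jᵀ, a] b)`, and the traceless matrices that are
trace-orthogonal to `p_e` form the nilradical of `p_e` (the upper-right `e × d` block). So `a`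
is in the kernel of `ω_J` iff `[Jᵀ, a]` lies in that nilradical. Writing `J_{(e,d)}` in blocks
through `J_{ε(e,d)}`, this condition kills the off-diagonal blocks of `a`, identifies its diagonal
blocks, and passes the same condition to a corner of `a` for `ε(e,d)`. Following the Euclidean
algorithm down to `(1, 1)` shows that `a` is scalar, hence zero since its trace vanishes.
-/

lemma Jfun_one_one (i j : ℕ) : Jfun 1 1 i j = if i = 0 ∧ j = 1 then 1 else 0 := by
  rw [Jfun.eq_def]; simp

lemma Jfun_of_lt {e d : ℕ} (he : 0 < e) (hed : e < d) (i j : ℕ) :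
    Jfun e d i j = if i < e then (if j = i + e then 1 else 0)
      else if e ≤ j then Jfun e (d - e) (i - e) (j - e) else 0 := by
  rw [Jfun.eq_def]
  simp only [if_neg (show ¬(e = 1 ∧ d = 1) by omega),
    dif_pos (show 0 < e ∧ e < d from ⟨he, hed⟩)]

lemma Jfun_of_gt {e d : ℕ} (hd : 0 < d) (hde : d < e) (i j : ℕ) :
    Jfun e d i j = if i < e ∧ j < e then Jfun (e - d) d i j
      else if e - d ≤ i ∧ i < e ∧ j = i + d then 1 else 0 := by
  rw [Jfun.eq_def]
  simp only [if_neg (show ¬(e = 1 ∧ d = 1) by omega), dif_neg (show ¬(0 < e ∧ e < d) by omega),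
    dif_pos (show 0 < d ∧ d < e from ⟨hd, hde⟩)]

/-! Matrices and vectors are indexed by `ℕ` from here on, so that a corner of a matrix can be
passed to the recursion on `(e, d)` without reindexing; `jtMul e d x = Jᵀ x` and
`jMul e d x = J x` for `J = J_{(e,d)}`. In lemma names, `left` refers to an index `< e` and
`right` to an index `e + s`. -/

noncomputable def jtMul (e d : ℕ) (x : ℕ → ℂ) (i : ℕ) : ℂ :=
  ∑ k ∈ Finset.range (e + d), Jfun e d k i * x k

noncomputable def jMul (e d : ℕ) (x : ℕ → ℂ) (i : ℕ) : ℂ :=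
  ∑ k ∈ Finset.range (e + d), Jfun e d i k * x k

lemma jtMul_eq_zero {e d : ℕ} {x : ℕ → ℂ} (hx : ∀ k < e + d, x k = 0) (i : ℕ) :
    jtMul e d x i = 0 :=
  Finset.sum_eq_zero fun k hk => by rw [hx k (Finset.mem_range.1 hk), mul_zero]

lemma jMul_eq_zero {e d : ℕ} {x : ℕ → ℂ} (hx : ∀ k < e + d, x k = 0) (i : ℕ) :
    jMul e d x i = 0 :=
  Finset.sum_eq_zero fun k hk => by rw [hx k (Finset.mem_range.1 hk), mul_zero]

noncomputable def bracket (e d : ℕ) (a : ℕ → ℕ → ℂ) (i j : ℕ) : ℂ :=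
  jtMul e d (fun k => a k j) i - jMul e d (a i) j

def InParabolic (n e : ℕ) (a : ℕ → ℕ → ℂ) : Prop :=
  ∀ i j, i < n → e ≤ i → j < e → a i j = 0

def InNilradical (n e : ℕ) (m : ℕ → ℕ → ℂ) : Prop :=
  ∀ i j, i < n → j < n → (e ≤ i ∨ j < e) → m i j = 0

def IsScalarOn (n : ℕ) (a : ℕ → ℕ → ℂ) (c : ℂ) : Prop :=
  ∀ i j, i < n → j < n → a i j = if i = j then c else 0

lemma bracket_eq_zero_of_isScalarOn {e d : ℕ} {a : ℕ → ℕ → ℂ} {c : ℂ}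
    (ha : IsScalarOn (e + d) a c) {i j : ℕ} (hi : i < e + d) (hj : j < e + d) :
    bracket e d a i j = 0 := by
  have hcol : jtMul e d (fun k => a k j) i = Jfun e d j i * c := by
    rw [jtMul, Finset.sum_congr rfl fun k hk => by rw [ha k j (Finset.mem_range.1 hk) hj]]
    simp [hj]
  have hrow : jMul e d (a i) j = Jfun e d j i * c := by
    rw [jMul, Finset.sum_congr rfl fun k hk => by rw [ha i k hi (Finset.mem_range.1 hk)]]
    simp [hi]
  rw [bracket, hcol, hrow, sub_self]

section lt

/-! For `e < d`, `J_{(e,d)} = [[0, [1 0]], [0, J_{(e,d-e)}]]` in blocks of sizes `e` and `d`. -/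

variable {e d : ℕ} (he : 0 < e) (hed : e < d) (x : ℕ → ℂ) {a : ℕ → ℕ → ℂ}
include he hed

lemma jtMul_left_of_lt {i : ℕ} (hi : i < e) : jtMul e d x i = 0 := by
  refine Finset.sum_eq_zero fun k _ => ?_
  rw [Jfun_of_lt he hed]
  split_ifs <;> first | omega | simp

lemma jtMul_right_of_lt (s : ℕ) :
    jtMul e d x (e + s) = (if s < e then x s else 0)
      + jtMul e (d - e) (fun k => x (e + k)) s := by
  rw [jtMul, jtMul, Finset.sum_range_add, Nat.add_sub_cancel' hed.le]
  congr 1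
  · trans ∑ k ∈ Finset.range e, if k = s then x k else 0
    swap
    · simp only [Finset.sum_ite_eq', Finset.mem_range]
    refine Finset.sum_congr rfl fun k hk => ?_
    rw [Finset.mem_range] at hk
    rw [Jfun_of_lt he hed, if_pos hk]
    split_ifs <;> first | omega | simp
  · refine Finset.sum_congr rfl fun k _ => ?_
    rw [Jfun_of_lt he hed, if_neg (by omega), if_pos (by omega)]
    simp

lemma jMul_left_of_lt {i : ℕ} (hi : i < e) : jMul e d x i = x (e + i) := by
  rw [jMul, Finset.sum_eq_single_of_mem (e + i) (by simp; omega)]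
  · rw [Jfun_of_lt he hed, if_pos hi, if_pos (by omega), one_mul]
  · intro k _ hk
    rw [Jfun_of_lt he hed, if_pos hi, if_neg (by omega), zero_mul]

lemma jMul_right_of_lt (s : ℕ) :
    jMul e d x (e + s) = jMul e (d - e) (fun k => x (e + k)) s := by
  rw [jMul, jMul, Finset.sum_range_add, Nat.add_sub_cancel' hed.le, Finset.sum_eq_zero, zero_add]
  · refine Finset.sum_congr rfl fun k _ => ?_
    rw [Jfun_of_lt he hed, if_neg (by omega), if_pos (by omega)]
    simp
  · intro k hk
    rw [Finset.mem_range] at hk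
    rw [Jfun_of_lt he hed, if_neg (by omega), if_neg (by omega), zero_mul]

lemma bracket_left_left_of_lt {i j : ℕ} (hi : i < e) (hj : j < e) :
    bracket e d a i j = -a i (e + j) := by
  rw [bracket, jtMul_left_of_lt he hed _ hi, jMul_left_of_lt he hed _ hj, zero_sub]

lemma bracket_right_left_of_lt (hp : InParabolic (e + d) e a) {s t : ℕ} (ht : t < e) :
    bracket e d a (e + s) t = (if s < e then a s t else 0) - a (e + s) (e + t) := by
  rw [bracket, jtMul_right_of_lt he hed, jMul_left_of_lt he hed _ ht,
    jtMul_eq_zero (fun k hk => hp _ _ (by omega) (by omega) ht), add_zero]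

lemma bracket_right_right_of_lt (s t : ℕ) :
    bracket e d a (e + s) (e + t) = (if s < e then a s (e + t) else 0)
      + bracket e (d - e) (fun k l => a (e + k) (e + l)) s t := by
  rw [bracket, bracket, jtMul_right_of_lt he hed, jMul_right_of_lt he hed]
  ring

variable (hp : InParabolic (e + d) e a) (hn : InNilradical (e + d) e (bracket e d a))

include hn in
lemma apply_left_add_of_lt {i j : ℕ} (hi : i < e) (hj : j < e) : a i (e + j) = 0 := by
  simpa [bracket_left_left_of_lt he hed hi hj] using hn i j (by omega) (by omega) (.inr hj)

include hn in
lemma inNilradical_bracket_corner_of_lt :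
    InNilradical (e + (d - e)) e (bracket e (d - e) (fun k l => a (e + k) (e + l))) := by
  intro s t hs ht hst
  have h := hn (e + s) (e + t) (by omega) (by omega) (.inl (by omega))
  rw [bracket_right_right_of_lt he hed] at h
  split_ifs at h with hse
  · rwa [apply_left_add_of_lt he hed hn hse (by omega), zero_add] at h
  · rwa [zero_add] at h

include hp hn

lemma apply_add_add_of_lt {s t : ℕ} (hs : s < d) (ht : t < e) :
    a (e + s) (e + t) = if s < e then a s t else 0 := by
  have h := hn (e + s) t (by omega) (by omega) (.inr ht)
  rw [bracket_right_left_of_lt he hed hp ht] at h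
  exact (sub_eq_zero.1 h).symm

lemma inParabolic_corner_of_lt :
    InParabolic (e + (d - e)) e (fun k l => a (e + k) (e + l)) := by
  intro s t hs hes ht
  dsimp only
  rw [apply_add_add_of_lt he hed hp hn (by omega) ht, if_neg (by omega)]

lemma isScalarOn_of_corner_of_lt {c : ℂ}
    (hc : IsScalarOn (e + (d - e)) (fun k l => a (e + k) (e + l)) c) :
    IsScalarOn (e + d) a c := by
  rw [Nat.add_sub_cancel' hed.le] at hc
  intro i j hi hj
  rcases lt_or_ge i e with hie | hie <;> rcases lt_or_ge j e with hje | hje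
  · have h := apply_add_add_of_lt he hed hp hn (s := i) (by omega) hje
    rw [if_pos hie] at h
    rw [← h]
    exact hc i j (by omega) (by omega)
  · obtain ⟨t, rfl⟩ := Nat.exists_eq_add_of_le hje
    have h := hn (e + i) (e + t) (by omega) hj (.inl (by omega))
    rw [bracket_right_right_of_lt he hed, if_pos hie,
      bracket_eq_zero_of_isScalarOn (by rwa [Nat.add_sub_cancel' hed.le]) (by omega) (by omega),
      add_zero] at h
    rw [h, if_neg (by omega)]
  · rw [hp i j hi hie hje, if_neg (by omega)]
  · obtain ⟨s, rfl⟩ := Nat.exists_eq_add_of_le hie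
    obtain ⟨t, rfl⟩ := Nat.exists_eq_add_of_le hje
    rw [show a (e + s) (e + t) = _ from hc s t (by omega) (by omega)]
    simp

end lt

section gt

/-! For `d < e`, `J_{(e,d)} = [[J_{(e-d,d)}, [0; 1]], [0, 0]]` in blocks of sizes `e` and `d`. -/

variable {e d : ℕ} (hd : 0 < d) (hde : d < e) (x : ℕ → ℂ) {a : ℕ → ℕ → ℂ}
include hd hde

lemma jtMul_left_of_gt {i : ℕ} (hi : i < e) : jtMul e d x i = jtMul (e - d) d x i := by
  rw [jtMul, jtMul, Finset.sum_range_add, Nat.sub_add_cancel hde.le,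
    Finset.sum_eq_zero (s := Finset.range d), add_zero]
  · refine Finset.sum_congr rfl fun k hk => ?_
    rw [Finset.mem_range] at hk
    rw [Jfun_of_gt hd hde, if_pos ⟨hk, hi⟩]
  · intro k _
    rw [Jfun_of_gt hd hde, if_neg (by omega), if_neg (by omega), zero_mul]

lemma jtMul_right_of_gt {t : ℕ} (ht : t < d) : jtMul e d x (e + t) = x (e - d + t) := by
  rw [jtMul, Finset.sum_eq_single_of_mem (e - d + t) (by simp; omega)]
  · rw [Jfun_of_gt hd hde, if_neg (by omega), if_pos (by omega), one_mul]
  · intro k _ hk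
    rw [Jfun_of_gt hd hde, if_neg (by omega), if_neg (by omega), zero_mul]

lemma jMul_left_of_gt {i : ℕ} (hi : i < e) :
    jMul e d x i = jMul (e - d) d x i + (if e - d ≤ i then x (i + d) else 0) := by
  rw [jMul, jMul, Finset.sum_range_add, Nat.sub_add_cancel hde.le]
  congr 1
  · refine Finset.sum_congr rfl fun k hk => ?_
    rw [Finset.mem_range] at hk
    rw [Jfun_of_gt hd hde, if_pos ⟨hi, hk⟩]
  · split_ifs with hid
    · rw [Finset.sum_eq_single_of_mem (i + d - e) (by simp; omega)]
      · rw [Jfun_of_gt hd hde, if_neg (by omega), if_pos (by omega), one_mul]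
        congr 1; omega
      · intro k _ hk
        rw [Jfun_of_gt hd hde, if_neg (by omega), if_neg (by omega), zero_mul]
    · refine Finset.sum_eq_zero fun k _ => ?_
      rw [Jfun_of_gt hd hde, if_neg (by omega), if_neg (by omega), zero_mul]

lemma jMul_right_of_gt (s : ℕ) : jMul e d x (e + s) = 0 := by
  refine Finset.sum_eq_zero fun k _ => ?_
  rw [Jfun_of_gt hd hde, if_neg (by omega), if_neg (by omega), zero_mul]

lemma bracket_right_right_of_gt {s : ℕ} (hs : s < d) (t : ℕ) :
    bracket e d a (e + s) (e + t) = a (e - d + s) (e + t) := by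
  rw [bracket, jtMul_right_of_gt hd hde _ hs, jMul_right_of_gt hd hde, sub_zero]

lemma bracket_right_left_of_gt (hp : InParabolic (e + d) e a) {s j : ℕ} (hs : s < d)
    (hj : j < e) :
    bracket e d a (e + s) j = a (e - d + s) j - (if e - d ≤ j then a (e + s) (j + d) else 0) := by
  rw [bracket, jtMul_right_of_gt hd hde _ hs, jMul_left_of_gt hd hde _ hj,
    jMul_eq_zero (fun k hk => hp _ _ (by omega) (by omega) (by omega)), zero_add]

lemma bracket_left_left_of_gt {i j : ℕ} (hi : i < e) (hj : j < e) :
    bracket e d a i j = bracket (e - d) d a i j - (if e - d ≤ j then a i (j + d) else 0) := by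
  rw [bracket, bracket, jtMul_left_of_gt hd hde _ hi, jMul_left_of_gt hd hde _ hj]
  ring

variable (hp : InParabolic (e + d) e a) (hn : InNilradical (e + d) e (bracket e d a))

include hn in
lemma apply_sub_add_add_of_gt {s t : ℕ} (hs : s < d) (ht : t < d) :
    a (e - d + s) (e + t) = 0 := by
  rw [← bracket_right_right_of_gt hd hde (a := a) hs t]
  exact hn _ _ (by omega) (by omega) (.inl (by omega))

include hn in
lemma inNilradical_bracket_of_gt : InNilradical (e - d + d) (e - d) (bracket (e - d) d a) := by
  intro i j hi hj hij
  have h := hn i j (by omega) (by omega) (.inr (by omega))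
  rw [bracket_left_left_of_gt hd hde (by omega) (by omega)] at h
  split_ifs at h with hdj
  · obtain ⟨s, rfl⟩ := Nat.exists_eq_add_of_le (hij.resolve_right (by omega))
    rwa [show j + d = e + (j - (e - d)) by omega,
      apply_sub_add_add_of_gt hd hde hn (by omega) (by omega), sub_zero] at h
  · rwa [sub_zero] at h

include hp hn

lemma apply_sub_add_of_gt {s j : ℕ} (hs : s < d) (hj : j < e) :
    a (e - d + s) j = if e - d ≤ j then a (e + s) (j + d) else 0 := by
  have h := hn (e + s) j (by omega) (by omega) (.inr hj)
  rw [bracket_right_left_of_gt hd hde hp hs hj] at h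
  exact sub_eq_zero.1 h

lemma inParabolic_of_gt : InParabolic (e - d + d) (e - d) a := by
  intro i j hi hdi hj
  obtain ⟨s, rfl⟩ := Nat.exists_eq_add_of_le hdi
  rw [apply_sub_add_of_gt hd hde hp hn (by omega) (by omega), if_neg (by omega)]

lemma isScalarOn_of_gt {c : ℂ} (hc : IsScalarOn (e - d + d) a c) : IsScalarOn (e + d) a c := by
  intro i j hi hj
  rcases lt_or_ge i e with hie | hie <;> rcases lt_or_ge j e with hje | hje
  · exact hc i j (by omega) (by omega)
  · obtain ⟨t, rfl⟩ := Nat.exists_eq_add_of_le hje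
    have h := hn i (e - d + t) (by omega) (by omega) (.inr (by omega))
    rw [bracket_left_left_of_gt hd hde hie (by omega), if_pos (by omega),
      bracket_eq_zero_of_isScalarOn hc (by omega) (by omega), zero_sub, neg_eq_zero,
      show e - d + t + d = e + t by omega] at h
    rw [h, if_neg (by omega)]
  · rw [hp i j hi hie hje, if_neg (by omega)]
  · obtain ⟨s, rfl⟩ := Nat.exists_eq_add_of_le hie
    obtain ⟨t, rfl⟩ := Nat.exists_eq_add_of_le hje
    have h := apply_sub_add_of_gt hd hde hp hn (s := s) (j := e - d + t) (by omega) (by omega)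
    rw [if_pos (by omega), show e - d + t + d = e + t by omega,
      hc _ _ (by omega) (by omega)] at h
    rw [← h]
    simp

end gt

lemma isScalarOn_one_one {a : ℕ → ℕ → ℂ} (hp : InParabolic (1 + 1) 1 a)
    (hn : InNilradical (1 + 1) 1 (bracket 1 1 a)) : IsScalarOn (1 + 1) a (a 0 0) := by
  have h00 := hn 0 0 (by omega) (by omega) (.inr (by omega))
  have h10 := hn 1 0 (by omega) (by omega) (.inr (by omega))
  have h11 := hn 1 1 (by omega) (by omega) (.inl le_rfl)
  have h10' := hp 1 0 (by omega) le_rfl (by omega)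
  simp only [bracket, jtMul, jMul, Finset.sum_range_succ, Finset.sum_range_zero, Jfun_one_one]
    at h00 h10 h11
  norm_num at h00 h10 h11
  intro i j hi hj
  interval_cases i <;> interval_cases j <;> simp_all [sub_eq_zero]

theorem exists_isScalarOn_of_inNilradical_bracket {e d : ℕ} (he : 0 < e) (hd : 0 < d)
    (hcop : e.Coprime d) {a : ℕ → ℕ → ℂ} (hp : InParabolic (e + d) e a)
    (hn : InNilradical (e + d) e (bracket e d a)) : ∃ c, IsScalarOn (e + d) a c := by
  rcases lt_trichotomy e d with hed | rfl | hde
  · obtain ⟨c, hc⟩ := exists_isScalarOn_of_inNilradical_bracket he (Nat.sub_pos_of_lt hed)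
      ((Nat.coprime_sub_self_right hed.le).2 hcop) (inParabolic_corner_of_lt he hed hp hn)
      (inNilradical_bracket_corner_of_lt he hed hn)
    exact ⟨c, isScalarOn_of_corner_of_lt he hed hp hn hc⟩
  · obtain rfl := (Nat.coprime_self e).1 hcop
    exact ⟨a 0 0, isScalarOn_one_one hp hn⟩
  · obtain ⟨c, hc⟩ := exists_isScalarOn_of_inNilradical_bracket (Nat.sub_pos_of_lt hde) hd
      ((Nat.coprime_sub_self_left hde.le).2 hcop) (inParabolic_of_gt hd hde hp hn)
      (inNilradical_bracket_of_gt hd hde hn)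
    exact ⟨c, isScalarOn_of_gt hd hde hp hn hc⟩
termination_by e + d

lemma trace_mul_commutator {R n : Type*} [CommRing R] [Fintype n] (J a b : Matrix n n R) :
    (J * (a * b - b * a)).trace = ((J * a - a * J) * b).trace := by
  rw [Matrix.mul_sub, Matrix.sub_mul, trace_sub, trace_sub, Matrix.mul_assoc,
    Matrix.mul_assoc a, trace_mul_comm a, Matrix.mul_assoc]

lemma eq_zero_of_forall_diag_eq {K : Type*} [Field K] [CharZero K] {n : ℕ} (hn : n ≠ 0)
    {M : Matrix (Fin n) (Fin n) K} {c : K} (hM : ∀ u, M u u = c) (htr : M.trace = 0) : c = 0 := by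
  simpa [trace, hM, hn] using htr

lemma apply_eq_zero_of_trace_mul_eq_zero {K : Type*} [Field K] [CharZero K] {n e : ℕ}
    {M : Matrix (Fin n) (Fin n) K} (htr : M.trace = 0)
    (hM : ∀ b : Matrix (Fin n) (Fin n) K, b.trace = 0 →
      (∀ i j : Fin n, e ≤ (i : ℕ) → (j : ℕ) < e → b i j = 0) → (M * b).trace = 0)
    (u v : Fin n) (huv : e ≤ (u : ℕ) ∨ (v : ℕ) < e) : M u v = 0 := by
  -- test `M` against `single v u 1` (`u ≠ v`) and `single u u 1 - single v v 1`, which lie in `p_e`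
  have hsingle : ∀ u v : Fin n, (M * single v u 1).trace = M u v := by
    simp [trace_mul_single]
  have hdiag : ∀ u v : Fin n, M u u = M v v := by
    intro u v
    rcases eq_or_ne u v with rfl | huv
    · rfl
    have h := hM (single u u 1 - single v v 1) (by simp) fun i j hi hj => by
      have hij : i ≠ j := by rintro rfl; omega
      rw [Matrix.sub_apply, single_apply_of_ne (h := fun h => hij (h.1.symm.trans h.2)),
        single_apply_of_ne (h := fun h => hij (h.1.symm.trans h.2)), sub_zero]
    rwa [Matrix.mul_sub, trace_sub, hsingle, hsingle, sub_eq_zero] at h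
  rcases eq_or_ne u v with rfl | huv'
  · exact eq_zero_of_forall_diag_eq (Fin.pos u).ne' (fun v => hdiag v u) htr
  · rw [← hsingle]
    refine hM _ (trace_single_eq_of_ne _ _ _ huv'.symm) fun i j hi hj => ?_
    refine single_apply_of_ne _ _ _ _ _ ?_
    rintro ⟨rfl, rfl⟩
    omega

def toNatFun {n : ℕ} (a : Matrix (Fin n) (Fin n) ℂ) : ℕ → ℕ → ℂ :=
  fun i j => if h : i < n ∧ j < n then a ⟨i, h.1⟩ ⟨j, h.2⟩ else 0

lemma toNatFun_apply {n : ℕ} (a : Matrix (Fin n) (Fin n) ℂ) (u v : Fin n) :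
    toNatFun a u v = a u v :=
  dif_pos ⟨u.2, v.2⟩

lemma inParabolic_toNatFun {n e : ℕ} {a : Matrix (Fin n) (Fin n) ℂ}
    (ha : ∀ i j : Fin n, e ≤ (i : ℕ) → (j : ℕ) < e → a i j = 0) : InParabolic n e (toNatFun a) :=
  fun i j hi hei hje => by
    rw [toNatFun, dif_pos ⟨hi, by omega⟩]
    exact ha _ _ hei hje

lemma bracket_toNatFun (e d : ℕ) (a : Matrix (Fin (e + d)) (Fin (e + d)) ℂ) (u v : Fin (e + d)) :
    bracket e d (toNatFun a) u v =
      ((of fun i j : Fin (e + d) => Jfun e d i j)ᵀ * a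
        - a * (of fun i j : Fin (e + d) => Jfun e d i j)ᵀ) u v := by
  rw [Matrix.sub_apply, mul_apply, mul_apply]
  simp only [bracket, jtMul, jMul, transpose_apply, of_apply,
    ← Fin.sum_univ_eq_sum_range (fun k => Jfun e d k u * toNatFun a k v),
    ← Fin.sum_univ_eq_sum_range (fun k => Jfun e d v k * toNatFun a u k), toNatFun_apply, mul_comm]

theorem stmt_9 (e d : ℕ) (he : 0 < e) (hd : 0 < d) (hcop : Nat.Coprime e d)
    (J : Matrix (Fin (e + d)) (Fin (e + d)) ℂ)
    (hJ : J = Matrix.of fun i j : Fin (e + d) => Jfun e d (i : ℕ) (j : ℕ))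
    (a : Matrix (Fin (e + d)) (Fin (e + d)) ℂ)
    (ha0 : a.trace = 0)
    (ha1 : ∀ i j : Fin (e + d), e ≤ (i : ℕ) → (j : ℕ) < e → a i j = 0)
    (hortho : ∀ b : Matrix (Fin (e + d)) (Fin (e + d)) ℂ, b.trace = 0 →
      (∀ i j : Fin (e + d), e ≤ (i : ℕ) → (j : ℕ) < e → b i j = 0) →
      (Jᵀ * (a * b - b * a)).trace = 0) :
    a = 0 := by
  subst hJ
  have hnil := apply_eq_zero_of_trace_mul_eq_zero (by rw [trace_sub, trace_mul_comm, sub_self])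
    fun b hb hpb => (trace_mul_commutator _ a b).symm.trans (hortho b hb hpb)
  obtain ⟨c, hc⟩ := exists_isScalarOn_of_inNilradical_bracket he hd hcop (inParabolic_toNatFun ha1)
    fun i j hi hj hij => by
      simpa only [← bracket_toNatFun] using hnil ⟨i, hi⟩ ⟨j, hj⟩ hij
  have hdiag : ∀ u, a u u = c := fun u => by rw [← toNatFun_apply a u u, hc u u u.2 u.2, if_pos rfl]
  have hc0 : c = 0 := eq_zero_of_forall_diag_eq (by omega) hdiag ha0
  ext u v
  rw [← toNatFun_apply a u v, hc u v u.2 v.2, hc0, ite_self, Matrix.zero_apply]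
end

section
/- Let f be a finite-dimensional Lie algebra over a field k, l ⊂ f a Lie subalgebra, n ⊂ f an abelian Lie ideal with f = l ⊕ n (direct sum of vector spaces). Fix n̂ ∈ n* such that for any n̂' ∈ n* there exists l ∈ l with n̂'(m) = n̂([m,l]) for all m ∈ n. Let s = {l ∈ l : n̂([x,l]) = 0 for all x ∈ f}. If ŝ ∈ l* restricts to a Frobenius functional on s (i.e. (a,b) ↦ ŝ([a,b]) is non-degenerate on s × s), then ŝ + n̂ (extended by zero to f) is a Frobenius functional on f. -/
/-! Write `x = a + m` with `a ∈ l` and `m ∈ n`. Pairing `x` with `n`, which is abelian, gives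
`n̂ [a, n] = 0`; since also `n̂ [l, l] = 0`, the component `a` lies in `s`. Pairing `x` with `s`
then puts `a` in the radical of `ŝ` on `s`, so `a = 0`. Finally `n̂ [m, l] = 0`, and since every
functional on `n` is of the form `n̂ [·, b]` with `b ∈ l`, every functional vanishing on `l` kills
`m`; hence `m ∈ l ∩ n = 0`. -/

namespace LieAlgebra

variable {L : Type*} [LieRing L]

section CommRing

variable {k : Type*} [CommRing k] [LieAlgebra k L]

theorem apply_lie_eq_zero_of_mem_left {n : LieIdeal k L} {φ : Module.Dual k L}
    (hφ : ∀ x ∈ n, φ x = 0) {m : L} (hm : m ∈ n) (y : L) : φ ⁅m, y⁆ = 0 :=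
  hφ _ (lie_mem_left k L n m y hm)

theorem apply_lie_eq_zero_of_mem_right {n : LieIdeal k L} {φ : Module.Dual k L}
    (hφ : ∀ x ∈ n, φ x = 0) {m : L} (hm : m ∈ n) (y : L) : φ ⁅y, m⁆ = 0 :=
  hφ _ (lie_mem_right k L n y m hm)

theorem add_apply_lie_of_mem_abelian {n : LieIdeal k L}
    (habel : ∀ x ∈ n, ∀ y ∈ n, ⁅x, y⁆ = (0 : L)) {φs : Module.Dual k L}
    (hφs : ∀ x ∈ n, φs x = 0) (φn : Module.Dual k L) (a : L) {m m' : L} (hm : m ∈ n)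
    (hm' : m' ∈ n) : (φs + φn) ⁅a + m, m'⁆ = φn ⁅a, m'⁆ := by
  rw [add_lie, habel m hm m' hm', add_zero, LinearMap.add_apply,
    apply_lie_eq_zero_of_mem_right hφs hm', zero_add]

theorem add_apply_lie_of_forall_apply_lie_eq_zero {l : LieSubalgebra k L} {n : LieIdeal k L}
    {φs φn : Module.Dual k L} (hφs : ∀ x ∈ n, φs x = 0) (hφn : ∀ x ∈ l, φn x = 0)
    {a m b : L} (ha : a ∈ l) (hm : m ∈ n) (hb : b ∈ l) (hbs : ∀ x : L, φn ⁅x, b⁆ = 0) :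
    (φs + φn) ⁅a + m, b⁆ = φs ⁅a, b⁆ := by
  rw [add_lie, map_add, LinearMap.add_apply, LinearMap.add_apply,
    apply_lie_eq_zero_of_mem_left hφs hm, hφn _ (l.lie_mem ha hb), hbs m]
  ring

theorem forall_apply_lie_eq_zero_of_sup_eq_top {l : LieSubalgebra k L} {n : LieIdeal k L}
    (hsup : l.toSubmodule ⊔ LieSubmodule.toSubmodule n = ⊤) {φ : Module.Dual k L}
    (hφ : ∀ x ∈ l, φ x = 0) {a : L} (ha : a ∈ l) (hn : ∀ m ∈ n, φ ⁅a, m⁆ = 0) (z : L) :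
    φ ⁅z, a⁆ = 0 := by
  obtain ⟨b, m, hb, hm, rfl⟩ := Submodule.codisjoint_iff_exists_add_eq.mp (codisjoint_iff.mpr hsup) z
  rw [add_lie, map_add, hφ _ (l.lie_mem hb ha), ← lie_skew, map_neg, hn m hm]
  simp

end CommRing

theorem mem_of_forall_apply_lie_eq_zero {k : Type*} [Field k] [LieAlgebra k L]
    {l : LieSubalgebra k L} {n : LieIdeal k L} {φn : Module.Dual k L}
    (hreg : ∀ φ : Module.Dual k L, (∀ x ∈ l, φ x = 0) → ∃ b ∈ l, ∀ m ∈ n, φ m = φn ⁅m, b⁆)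
    {m : L} (hm : m ∈ n) (h : ∀ b ∈ l, φn ⁅m, b⁆ = 0) : m ∈ l := by
  rw [← LieSubalgebra.mem_toSubmodule,
    ← Subspace.forall_mem_dualAnnihilator_apply_eq_zero_iff]
  intro φ hφ
  obtain ⟨b, hb, hφb⟩ := hreg φ ((Submodule.mem_dualAnnihilator φ).mp hφ)
  rw [hφb m hm, h b hb]

end LieAlgebra

open LieAlgebra in
theorem stmt_10_general (k L : Type*) [Field k] [LieRing L] [LieAlgebra k L]
    (l : LieSubalgebra k L) (n : LieIdeal k L)
    (habel : ∀ x ∈ n, ∀ y ∈ n, ⁅x, y⁆ = (0 : L))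
    (hdisj : l.toSubmodule ⊓ LieSubmodule.toSubmodule n = ⊥)
    (hsup : l.toSubmodule ⊔ LieSubmodule.toSubmodule n = ⊤)
    (φn : L →ₗ[k] k) (hφn : ∀ x ∈ l, φn x = 0)
    (hreg : ∀ φ : L →ₗ[k] k, (∀ x ∈ l, φ x = 0) →
      ∃ a ∈ l, ∀ m ∈ n, φ m = φn ⁅m, a⁆)
    (φs : L →ₗ[k] k) (hφs : ∀ x ∈ n, φs x = 0)
    (hfrobS : ∀ a ∈ l, (∀ x : L, φn ⁅x, a⁆ = 0) →
      (∀ b ∈ l, (∀ x : L, φn ⁅x, b⁆ = 0) → φs ⁅a, b⁆ = 0) → a = 0) :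
    ∀ x : L, (∀ y : L, (φs + φn) ⁅x, y⁆ = 0) → x = 0 := by
  intro x hx
  obtain ⟨a, m, ha, hm, rfl⟩ := Submodule.codisjoint_iff_exists_add_eq.mp (codisjoint_iff.mpr hsup) x
  have ha_stab : ∀ z : L, φn ⁅z, a⁆ = 0 :=
    forall_apply_lie_eq_zero_of_sup_eq_top hsup hφn ha fun m' hm' => by
      rw [← add_apply_lie_of_mem_abelian habel hφs φn a hm hm', hx]
  obtain rfl : a = 0 := hfrobS a ha ha_stab fun b hb hbs => by
    rw [← add_apply_lie_of_forall_apply_lie_eq_zero hφs hφn ha hm hb hbs, hx]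
  rw [zero_add] at hx ⊢
  have hm_l : m ∈ l := mem_of_forall_apply_lie_eq_zero hreg hm fun b _ => by
    simpa [apply_lie_eq_zero_of_mem_left hφs hm] using hx b
  exact Submodule.disjoint_def.mp (disjoint_iff.mpr hdisj) m hm_l hm

theorem stmt_10 (k L : Type*) [Field k] [LieRing L] [LieAlgebra k L] [Module.Finite k L]
    (l : LieSubalgebra k L) (n : LieIdeal k L)
    (habel : ∀ x ∈ n, ∀ y ∈ n, ⁅x, y⁆ = (0 : L))
    (hdisj : l.toSubmodule ⊓ LieSubmodule.toSubmodule n = ⊥)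
    (hsup : l.toSubmodule ⊔ LieSubmodule.toSubmodule n = ⊤)
    (φn : L →ₗ[k] k) (hφn : ∀ x ∈ l, φn x = 0)
    (hreg : ∀ φ : L →ₗ[k] k, (∀ x ∈ l, φ x = 0) →
      ∃ a ∈ l, ∀ m ∈ n, φ m = φn ⁅m, a⁆)
    (φs : L →ₗ[k] k) (hφs : ∀ x ∈ n, φs x = 0)
    (hfrobS : ∀ a ∈ l, (∀ x : L, φn ⁅x, a⁆ = 0) →
      (∀ b ∈ l, (∀ x : L, φn ⁅x, b⁆ = 0) → φs ⁅a, b⁆ = 0) → a = 0) :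
    ∀ x : L, (∀ y : L, (φs + φn) ⁅x, y⁆ = 0) → x = 0 :=
  stmt_10_general k L l n habel hdisj hsup φn hφn hreg φs hφs hfrobS
end
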